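/- arXiv:2301.06485 — 2 statements merged into one kernel-verified Lean document; each statement's English description precedes it below -/
import Mathlib

section
/- Let U ⊆ {0,1,*}^d with pairwise Hamming distances in {1,...,k} (d ≥ k+1). If U contains a vector with no joker coordinates (i.e., a fully binary vector), then |U| ≤ ∑_{j=0}^{k} C(d,j). -/
/-- Hamming distance between binary vectors. -/
def distB {d : ℕ} (u v : Fin d → Bool) : ℕ :=
  (Finset.univ.filter (fun i => u i ≠ v i)).card

/-- Hamming distance between vectors in {0,1,*}^d (entries `Option Bool`, `none` = joker):
counts coordinates where both entries are non-joker and differ. -/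
def distS {d : ℕ} (u v : Fin d → Option Bool) : ℕ :=
  (Finset.univ.filter (fun i => ∃ a b : Bool, u i = some a ∧ v i = some b ∧ a ≠ b)).card

/-- `v ∈ {0,1}^d` is covered by `u ∈ {0,1,*}^d` if they agree on all non-joker coordinates of `u`. -/
def covers {d : ℕ} (u : Fin d → Option Bool) (v : Fin d → Bool) : Prop :=
  ∀ i : Fin d, ∀ b : Bool, u i = some b → v i = b

/-- Number of joker (`*`) coordinates of `u`. -/
def jokers {d : ℕ} (u : Fin d → Option Bool) : ℕ :=
  (Finset.univ.filter (fun i => u i = none)).card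

/-- Hamming weight of a binary vector. -/
def weight {d : ℕ} (v : Fin d → Bool) : ℕ :=
  (Finset.univ.filter (fun i => v i = true)).card

/-!
Fill the jokers of each `u ∈ U` with the entries of the binary vector `b ∈ U`. The result is
covered by `u` and lies at Hamming distance `distS u b ≤ k` from `b`. Two distinct elements of `U`
are at distance at least one, so they cannot cover a common binary vector; hence filling is
injective on `U`, and `|U|` is at most the size of the Hamming ball of radius `k`.
-/

open Finset

theorem card_filter_card_le (α : Type*) [Fintype α] (k : ℕ) :
    #{s : Finset α | #s ≤ k} = ∑ j ∈ range (k + 1), (Fintype.card α).choose j := by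
  classical
  rw [card_eq_sum_card_fiberwise (f := card) (t := range (k + 1))
    fun s hs => by simpa [Nat.lt_succ_iff] using hs]
  refine sum_congr rfl fun j hj => ?_
  rw [← card_univ, ← card_powersetCard, powersetCard_eq_filter, filter_filter]
  congr 1
  ext s
  simp only [mem_filter, mem_powerset, subset_univ, true_and, mem_univ, mem_range] at hj ⊢
  omega

theorem card_filter_distB_le (d : ℕ) (b : Fin d → Bool) (k : ℕ) :
    #{v | distB v b ≤ k} = ∑ j ∈ range (k + 1), d.choose j := by
  have hflip (s : Finset (Fin d)) :
      ({i | xor (decide (i ∈ s)) (b i) ≠ b i} : Finset (Fin d)) = s := by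
    ext i; by_cases h : i ∈ s <;> simp [h]
  calc #{v | distB v b ≤ k} = #{s : Finset (Fin d) | #s ≤ k} :=
        card_nbij' (fun v => ({i | v i ≠ b i} : Finset (Fin d)))
          (fun s i => xor (decide (i ∈ s)) (b i))
          (fun v hv => by simpa [distB] using hv)
          (fun s hs => by simpa [distB, hflip s] using hs)
          (fun v _ => funext fun i => by
            simp only [mem_filter, mem_univ, true_and]; cases v i <;> cases b i <;> simp)
          (fun s _ => hflip s)
    _ = ∑ j ∈ range (k + 1), d.choose j := by simpa using card_filter_card_le (Fin d) k

def fillJokers {d : ℕ} (b : Fin d → Bool) (u : Fin d → Option Bool) : Fin d → Bool :=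
  fun i => (u i).getD (b i)

theorem covers_fillJokers {d : ℕ} (b : Fin d → Bool) (u : Fin d → Option Bool) :
    covers u (fillJokers b u) := by
  intro i a h
  simp [fillJokers, h]

theorem distS_eq_zero_of_covers {d : ℕ} {u u' : Fin d → Option Bool} {v : Fin d → Bool}
    (hu : covers u v) (hu' : covers u' v) : distS u u' = 0 := by
  refine card_eq_zero.2 (filter_eq_empty_iff.2 ?_)
  rintro i - ⟨a, a', ha, ha', hne⟩
  exact hne ((hu i a ha).symm.trans (hu' i a' ha'))

theorem distS_self {d : ℕ} (u : Fin d → Option Bool) : distS u u = 0 := by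
  refine card_eq_zero.2 (filter_eq_empty_iff.2 ?_)
  rintro i - ⟨a, a', ha, ha', hne⟩
  exact hne (Option.some_injective _ (ha.symm.trans ha'))

theorem distB_fillJokers {d : ℕ} (b : Fin d → Bool) (u : Fin d → Option Bool) :
    distB (fillJokers b u) b = distS u (fun i => some (b i)) := by
  unfold distB distS fillJokers
  congr 1
  ext i
  simp only [mem_filter, mem_univ, true_and]
  generalize u i = x; generalize b i = c
  rcases x with _ | _ | _ <;> cases c <;> simp

theorem exists_eq_some_of_jokers_eq_zero {d : ℕ} {u : Fin d → Option Bool} (h : jokers u = 0) :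
    ∃ b : Fin d → Bool, u = fun i => some (b i) := by
  refine ⟨fun i => (u i).getD false, funext fun i => ?_⟩
  have : u i ≠ none := fun hi => by
    simpa [hi] using filter_eq_empty_iff.1 (card_eq_zero.1 h) (mem_univ i)
  obtain ⟨a, ha⟩ := Option.ne_none_iff_exists'.1 this
  simp [ha]

theorem fillJokers_injOn {d : ℕ} (b : Fin d → Bool) {U : Set (Fin d → Option Bool)}
    (hU : ∀ u ∈ U, ∀ u' ∈ U, u ≠ u' → 1 ≤ distS u u') :
    Set.InjOn (fillJokers b) U := by
  intro u hu u' hu' h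
  by_contra hne
  have hcover : covers u' (fillJokers b u) := h ▸ covers_fillJokers b u'
  have := distS_eq_zero_of_covers (covers_fillJokers b u) hcover
  have := hU u hu u' hu' hne
  omega

theorem bound_with_binary_vector_general (d k : ℕ)
    (U : Finset (Fin d → Option Bool))
    (hU : ∀ u ∈ U, ∀ u' ∈ U, u ≠ u' → 1 ≤ distS u u' ∧ distS u u' ≤ k)
    (h0 : ∃ u ∈ U, jokers u = 0) :
    U.card ≤ ∑ j ∈ Finset.range (k + 1), d.choose j := by
  obtain ⟨_, hbU, hb⟩ := h0
  obtain ⟨b, rfl⟩ := exists_eq_some_of_jokers_eq_zero hb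
  have hball : ∀ u ∈ U, fillJokers b u ∈ ({v | distB v b ≤ k} : Finset _) := by
    intro u hu
    rw [mem_filter, distB_fillJokers]
    by_cases hub : u = fun i => some (b i)
    · simp [hub, distS_self]
    · exact ⟨mem_univ _, (hU u hu _ hbU hub).2⟩
  have hinj : Set.InjOn (fillJokers b) U :=
    fillJokers_injOn b fun u hu u' hu' h => (hU u hu u' hu' h).1
  calc U.card ≤ #{v | distB v b ≤ k} := card_le_card_of_injOn _ hball hinj
    _ = ∑ j ∈ range (k + 1), d.choose j := card_filter_distB_le d b k

/-- If U contains a fully binary vector, then |U| ≤ ∑_{j=0}^{k} C(d,j). -/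
theorem bound_with_binary_vector (d k : ℕ) (hd : k + 1 ≤ d)
    (U : Finset (Fin d → Option Bool))
    (hU : ∀ u ∈ U, ∀ u' ∈ U, u ≠ u' → 1 ≤ distS u u' ∧ distS u u' ≤ k)
    (h0 : ∃ u ∈ U, jokers u = 0) :
    U.card ≤ ∑ j ∈ Finset.range (k + 1), d.choose j :=
  bound_with_binary_vector_general d k U hU h0
end

section
/- Let U ⊆ {0,1,*}^4 with pairwise Hamming distances in {1,2}. Then |U| ≤ 9, and there exists such a set U with |U| = 9. -/
/-! ### Auxiliary definitions -/

abbrev BV := Fin 4 → Bool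
abbrev WD := Fin 4 → Option Bool

def Cov (u : WD) : Finset BV :=
  Finset.univ.filter (fun v => ∀ i : Fin 4, ∀ b : Bool, u i = some b → v i = b)

def OddS : Finset BV := Finset.univ.filter (fun v => weight v % 2 = 1)
def EvenS : Finset BV := Finset.univ.filter (fun v => weight v % 2 = 0)

def covE (u : WD) : ℕ := (Cov u ∩ EvenS).card
def covO (u : WD) : ℕ := (Cov u ∩ OddS).card

def bvec (u : WD) : BV := fun i => (u i).getD true

def emb (w : BV) : WD := fun i => some (w i)

def mid (w1 w2 : BV) : BV := fun i => if w1 i = w2 i then !(w1 i) else w1 i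

/-! ### Hand lemmas -/

lemma emb_inj {a b : BV} (h : emb a = emb b) : a = b := by
  funext i
  have := congrFun h i
  simpa [emb] using this

lemma distS_eq_zero_of_common {u u' : WD} {v : BV} (hv : v ∈ Cov u) (hv' : v ∈ Cov u') :
    distS u u' = 0 := by
  have h1 := (Finset.mem_filter.mp hv).2
  have h2 := (Finset.mem_filter.mp hv').2
  unfold distS
  rw [Finset.card_eq_zero, Finset.filter_eq_empty_iff]
  intro i _
  rintro ⟨a, b, ha, hb, hab⟩
  exact hab ((h1 i a ha).symm.trans (h2 i b hb))

lemma distS_emb (a b : BV) : distS (emb a) (emb b) = distB a b := by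
  unfold distS distB
  congr 1
  apply Finset.filter_congr
  intro i _
  simp [emb]

lemma distB_ge {u : WD} {v w : BV} (hv : v ∈ Cov u) :
    distB v w ≤ distS u (emb w) + jokers u := by
  have hc := (Finset.mem_filter.mp hv).2
  unfold distB distS jokers
  have hsub : (Finset.univ.filter (fun i => v i ≠ w i)) ⊆
      (Finset.univ.filter (fun i => ∃ a b : Bool, u i = some a ∧ emb w i = some b ∧ a ≠ b)) ∪
      (Finset.univ.filter (fun i => u i = none)) := by
    intro i hi
    have hne : v i ≠ w i := (Finset.mem_filter.mp hi).2
    rcases h : u i with _ | a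
    · exact Finset.mem_union_right _ (Finset.mem_filter.mpr ⟨Finset.mem_univ _, h⟩)
    · refine Finset.mem_union_left _ (Finset.mem_filter.mpr ⟨Finset.mem_univ _, ⟨a, w i, h, rfl, ?_⟩⟩)
      rw [← hc i a h]; exact hne
  calc (Finset.univ.filter (fun i => v i ≠ w i)).card ≤ _ := Finset.card_le_card hsub
    _ ≤ _ := Finset.card_union_le _ _

lemma distB_xor (t u v : BV) :
    distB (fun i => xor (u i) (t i)) (fun i => xor (v i) (t i)) = distB u v := by
  unfold distB
  congr 1
  apply Finset.filter_congr
  intro i _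
  cases hu : u i <;> cases hv : v i <;> cases ht : t i <;> simp [hu, hv, ht]

lemma xor_cancel {w w' t : BV}
    (h : (fun i => xor (w i) (t i)) = (fun i => xor (w' i) (t i))) : w = w' := by
  funext i
  have := congrFun h i
  cases hw : w i <;> cases hw' : w' i <;> cases ht : t i <;> simp_all

/-! ### Finite check lemmas (decide) -/

set_option maxHeartbeats 4000000
set_option maxRecDepth 100000
set_option synthInstance.maxSize 5000
set_option synthInstance.maxHeartbeats 1000000

lemma cardOdd : OddS.card = 8 := by decide
lemma cardEven : EvenS.card = 8 := by decide

lemma D1 : ∀ u : WD, jokers u = 0 →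
    (covE u = 1 ∧ covO u = 0) ∨ (covE u = 0 ∧ covO u = 1) := by decide

lemma D2 : ∀ u : WD, jokers u ≠ 0 →
    covE u = covO u ∧ 1 ≤ covO u ∧ (covO u = 1 → jokers u = 1) := by decide

lemma D7 : ∀ u : WD, jokers u = 0 → u = emb (bvec u) := by decide

lemma D7cov : ∀ u : WD, ∀ v : BV, jokers u = 0 → v ∈ Cov u → v = bvec u := by decide

lemma D6e : ∀ u : WD, jokers u = 0 → covO u = 0 → weight (bvec u) % 2 = 0 := by decide

lemma D6o : ∀ u : WD, jokers u = 0 → covO u ≠ 0 → weight (bvec u) % 2 = 1 := by decide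

lemma Par : ∀ a b : BV, (distB a b + weight a + weight b) % 2 = 0 := by decide

lemma D8 : ∀ w1 w2 : BV, weight w1 % 2 = 1 → weight w2 % 2 = 1 → distB w1 w2 = 2 →
    weight (mid w1 w2) % 2 = 1 ∧ distB (mid w1 w2) w2 = 4 := by decide

lemma L3 : ∀ v2 v3 w w' : BV,
    distB (fun _ => false) v2 = 2 → distB (fun _ => false) v3 = 2 → distB v2 v3 = 2 →
    distB (fun _ => false) w = 1 → distB v2 w = 1 → distB v3 w = 1 →
    distB (fun _ => false) w' = 1 → distB v2 w' = 1 → distB v3 w' = 1 → w = w' := by decide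

/-! ### The extremal example -/

def U9 : Finset WD :=
  {![none, none, some false, some false],
   ![none, some false, some false, some true],
   ![none, some true, some false, some true],
   ![some false, none, some true, some false],
   ![some false, some false, some true, some true],
   ![some false, some true, some true, some true],
   ![some true, none, some true, some false],
   ![some true, some false, some true, some true],
   ![some true, some true, some true, some true]}

lemma U9card : U9.card = 9 := by decide

lemma U9prop : ∀ u ∈ U9, ∀ u' ∈ U9, u ≠ u' → 1 ≤ distS u u' ∧ distS u u' ≤ 2 := by decide

/-! ### Helper: distance between two words with given parity classes -/

section Main

variable {U' : Finset WD}

lemma distB_of_mem (hP : ∀ u ∈ U', ∀ u' ∈ U', u ≠ u' → 1 ≤ distS u u' ∧ distS u u' ≤ 2)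
    {u u' : WD} (hu : u ∈ U') (hu' : u' ∈ U') (hne : u ≠ u')
    (h0 : jokers u = 0) (h0' : jokers u' = 0) :
    1 ≤ distB (bvec u) (bvec u') ∧ distB (bvec u) (bvec u') ≤ 2 := by
  have h := hP u hu u' hu' hne
  rwa [(D7 u h0), (D7 u' h0'), distS_emb] at h

end Main

/-- n(2,4) = 9. -/
theorem n_two_four :
    (∀ U : Finset (Fin 4 → Option Bool),
      (∀ u ∈ U, ∀ u' ∈ U, u ≠ u' → 1 ≤ distS u u' ∧ distS u u' ≤ 2) → U.card ≤ 9) ∧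
    (∃ U : Finset (Fin 4 → Option Bool),
      (∀ u ∈ U, ∀ u' ∈ U, u ≠ u' → 1 ≤ distS u u' ∧ distS u u' ≤ 2) ∧ U.card = 9) := by
  constructor
  · intro U hU
    by_contra hcard
    push_neg at hcard
    obtain ⟨U', hsub, hc10⟩ := Finset.exists_subset_card_eq (s := U) (n := 10) (by omega)
    have hP : ∀ u ∈ U', ∀ u' ∈ U', u ≠ u' → 1 ≤ distS u u' ∧ distS u u' ≤ 2 :=
      fun u hu u' hu' h => hU u (hsub hu) u' (hsub hu') h
    -- disjointness of covers
    have hdisj : ∀ u ∈ U', ∀ u' ∈ U', u ≠ u' →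
        Disjoint (Cov u ∩ OddS) (Cov u' ∩ OddS) ∧ Disjoint (Cov u ∩ EvenS) (Cov u' ∩ EvenS) := by
      intro u hu u' hu' hne
      have h1 := (hP u hu u' hu' hne).1
      have key : Disjoint (Cov u) (Cov u') := by
        rw [Finset.disjoint_left]
        intro v hv hv'
        have := distS_eq_zero_of_common hv hv'
        omega
      exact ⟨key.mono Finset.inter_subset_left Finset.inter_subset_left,
             key.mono Finset.inter_subset_left Finset.inter_subset_left⟩
    -- the two sum bounds
    have hsumO : ∑ u ∈ U', covO u ≤ 8 := by
      rw [show (8:ℕ) = OddS.card from cardOdd.symm]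
      rw [show ∑ u ∈ U', covO u = (U'.biUnion (fun u => Cov u ∩ OddS)).card from
        (Finset.card_biUnion (fun u hu u' hu' hne => (hdisj u hu u' hu' hne).1)).symm]
      exact Finset.card_le_card (Finset.biUnion_subset.mpr
        (fun u _ => Finset.inter_subset_right))
    have hsumE : ∑ u ∈ U', covE u ≤ 8 := by
      rw [show (8:ℕ) = EvenS.card from cardEven.symm]
      rw [show ∑ u ∈ U', covE u = (U'.biUnion (fun u => Cov u ∩ EvenS)).card from
        (Finset.card_biUnion (fun u hu u' hu' hne => (hdisj u hu u' hu' hne).2)).symm]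
      exact Finset.card_le_card (Finset.biUnion_subset.mpr
        (fun u _ => Finset.inter_subset_right))
    -- split U' by jokers, and joker-free words by parity class
    have hZA : (U'.filter (fun u => jokers u = 0)).card +
        (U'.filter (fun u => ¬ jokers u = 0)).card = U'.card :=
      Finset.card_filter_add_card_filter_not _
    have hEO : ((U'.filter (fun u => jokers u = 0)).filter (fun u => covO u = 0)).card +
        ((U'.filter (fun u => jokers u = 0)).filter (fun u => ¬ covO u = 0)).card =
        (U'.filter (fun u => jokers u = 0)).card :=
      Finset.card_filter_add_card_filter_not _
    have hsplitO : (∑ u ∈ U'.filter (fun u => jokers u = 0), covO u) +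
        (∑ u ∈ U'.filter (fun u => ¬ jokers u = 0), covO u) = ∑ u ∈ U', covO u :=
      Finset.sum_filter_add_sum_filter_not U' _ covO
    have hsplitE : (∑ u ∈ U'.filter (fun u => jokers u = 0), covE u) +
        (∑ u ∈ U'.filter (fun u => ¬ jokers u = 0), covE u) = ∑ u ∈ U', covE u :=
      Finset.sum_filter_add_sum_filter_not U' _ covE
    have hZsplitO : (∑ u ∈ (U'.filter (fun u => jokers u = 0)).filter (fun u => covO u = 0), covO u) +
        (∑ u ∈ (U'.filter (fun u => jokers u = 0)).filter (fun u => ¬ covO u = 0), covO u) =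
        ∑ u ∈ U'.filter (fun u => jokers u = 0), covO u :=
      Finset.sum_filter_add_sum_filter_not _ _ covO
    have hZsplitE : (∑ u ∈ (U'.filter (fun u => jokers u = 0)).filter (fun u => covO u = 0), covE u) +
        (∑ u ∈ (U'.filter (fun u => jokers u = 0)).filter (fun u => ¬ covO u = 0), covE u) =
        ∑ u ∈ U'.filter (fun u => jokers u = 0), covE u :=
      Finset.sum_filter_add_sum_filter_not _ _ covE
    have hUe0 : ∑ u ∈ (U'.filter (fun u => jokers u = 0)).filter (fun u => covO u = 0), covO u = 0 :=
      Finset.sum_eq_zero (fun u hu => (Finset.mem_filter.mp hu).2)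
    have hUo1 : ∑ u ∈ (U'.filter (fun u => jokers u = 0)).filter (fun u => ¬ covO u = 0), covO u =
        ((U'.filter (fun u => jokers u = 0)).filter (fun u => ¬ covO u = 0)).card := by
      rw [Finset.sum_congr rfl (g := fun _ => 1) ?_, ← Finset.card_eq_sum_ones]
      intro u hu
      have hz := Finset.mem_filter.mp hu
      have hj := (Finset.mem_filter.mp hz.1).2
      rcases D1 u hj with ⟨_, h0⟩ | ⟨_, h1⟩
      · exact absurd h0 hz.2
      · exact h1
    have hUe1 : ∑ u ∈ (U'.filter (fun u => jokers u = 0)).filter (fun u => covO u = 0), covE u =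
        ((U'.filter (fun u => jokers u = 0)).filter (fun u => covO u = 0)).card := by
      rw [Finset.sum_congr rfl (g := fun _ => 1) ?_, ← Finset.card_eq_sum_ones]
      intro u hu
      have hz := Finset.mem_filter.mp hu
      have hj := (Finset.mem_filter.mp hz.1).2
      rcases D1 u hj with ⟨h1, _⟩ | ⟨_, h1⟩
      · exact h1
      · exact absurd h1 (by rw [hz.2]; omega)
    have hUo0 : ∑ u ∈ (U'.filter (fun u => jokers u = 0)).filter (fun u => ¬ covO u = 0), covE u = 0 := by
      apply Finset.sum_eq_zero
      intro u hu
      have hz := Finset.mem_filter.mp hu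
      have hj := (Finset.mem_filter.mp hz.1).2
      rcases D1 u hj with ⟨_, h0⟩ | ⟨h0, _⟩
      · exact absurd h0 hz.2
      · exact h0
    have hAEO : ∑ u ∈ U'.filter (fun u => ¬ jokers u = 0), covE u =
        ∑ u ∈ U'.filter (fun u => ¬ jokers u = 0), covO u :=
      Finset.sum_congr rfl (fun u hu => (D2 u (Finset.mem_filter.mp hu).2).1)
    have hAle : (U'.filter (fun u => ¬ jokers u = 0)).card ≤
        ∑ u ∈ U'.filter (fun u => ¬ jokers u = 0), covO u := by
      rw [Finset.card_eq_sum_ones]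
      exact Finset.sum_le_sum (fun u hu => (D2 u (Finset.mem_filter.mp hu).2).2.1)
    -- membership helpers
    have memUe : ∀ u ∈ (U'.filter (fun u => jokers u = 0)).filter (fun u => covO u = 0),
        u ∈ U' ∧ jokers u = 0 ∧ weight (bvec u) % 2 = 0 := by
      intro u hu
      have hz := Finset.mem_filter.mp hu
      have hz1 := Finset.mem_filter.mp hz.1
      exact ⟨hz1.1, hz1.2, D6e u hz1.2 hz.2⟩
    have memUo : ∀ u ∈ (U'.filter (fun u => jokers u = 0)).filter (fun u => ¬ covO u = 0),
        u ∈ U' ∧ jokers u = 0 ∧ weight (bvec u) % 2 = 1 := by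
      intro u hu
      have hz := Finset.mem_filter.mp hu
      have hz1 := Finset.mem_filter.mp hz.1
      exact ⟨hz1.1, hz1.2, D6o u hz1.2 hz.2⟩
    -- at most 2 even joker-free words
    have he3 : ¬ 3 ≤ ((U'.filter (fun u => jokers u = 0)).filter (fun u => covO u = 0)).card := by
      intro h3
      obtain ⟨u1, u2, u3, m1, m2, m3, n12, n13, n23⟩ := Finset.two_lt_card_iff.mp
        (show 2 < ((U'.filter (fun u => jokers u = 0)).filter (fun u => covO u = 0)).card by omega)
      obtain ⟨t1, mt1, t2, mt2, nt⟩ := Finset.one_lt_card.mp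
        (show 1 < ((U'.filter (fun u => jokers u = 0)).filter (fun u => ¬ covO u = 0)).card by omega)
      obtain ⟨hU1, hj1, hw1⟩ := memUe u1 m1
      obtain ⟨hU2, hj2, hw2⟩ := memUe u2 m2
      obtain ⟨hU3, hj3, hw3⟩ := memUe u3 m3
      obtain ⟨hT1, hk1, hv1⟩ := memUo t1 mt1
      obtain ⟨hT2, hk2, hv2⟩ := memUo t2 mt2
      have evpair : ∀ u u', u ∈ U' → u' ∈ U' → u ≠ u' → jokers u = 0 → jokers u' = 0 →
          weight (bvec u) % 2 = weight (bvec u') % 2 → ∀ k : ℕ,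
          (weight (bvec u) + weight (bvec u')) % 2 = 0 → distB (bvec u) (bvec u') = 2 := by
        intro u u' hu hu' hne hju hju' _ k hpar
        have hd := distB_of_mem hP hu hu' hne hju hju'
        have hp := Par (bvec u) (bvec u')
        unfold weight at *
        omega
      have oddpair : ∀ u u', u ∈ U' → u' ∈ U' → u ≠ u' → jokers u = 0 → jokers u' = 0 →
          (weight (bvec u) + weight (bvec u')) % 2 = 1 → distB (bvec u) (bvec u') = 1 := by
        intro u u' hu hu' hne hju hju' hpar
        have hd := distB_of_mem hP hu hu' hne hju hju'
        have hp := Par (bvec u) (bvec u')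
        omega
      have net1 : ∀ u ∈ (U'.filter (fun u => jokers u = 0)).filter (fun u => covO u = 0),
          ∀ t ∈ (U'.filter (fun u => jokers u = 0)).filter (fun u => ¬ covO u = 0), u ≠ t := by
        rintro u hu t ht rfl
        exact (Finset.mem_filter.mp ht).2 (Finset.mem_filter.mp hu).2
      have d12 : distB (bvec u1) (bvec u2) = 2 := evpair u1 u2 hU1 hU2 n12 hj1 hj2 (by omega) 0 (by omega)
      have d13 : distB (bvec u1) (bvec u3) = 2 := evpair u1 u3 hU1 hU3 n13 hj1 hj3 (by omega) 0 (by omega)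
      have d23 : distB (bvec u2) (bvec u3) = 2 := evpair u2 u3 hU2 hU3 n23 hj2 hj3 (by omega) 0 (by omega)
      have e1t1 : distB (bvec u1) (bvec t1) = 1 := oddpair u1 t1 hU1 hT1 (net1 u1 m1 t1 mt1) hj1 hk1 (by omega)
      have e2t1 : distB (bvec u2) (bvec t1) = 1 := oddpair u2 t1 hU2 hT1 (net1 u2 m2 t1 mt1) hj2 hk1 (by omega)
      have e3t1 : distB (bvec u3) (bvec t1) = 1 := oddpair u3 t1 hU3 hT1 (net1 u3 m3 t1 mt1) hj3 hk1 (by omega)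
      have e1t2 : distB (bvec u1) (bvec t2) = 1 := oddpair u1 t2 hU1 hT2 (net1 u1 m1 t2 mt2) hj1 hk2 (by omega)
      have e2t2 : distB (bvec u2) (bvec t2) = 1 := oddpair u2 t2 hU2 hT2 (net1 u2 m2 t2 mt2) hj2 hk2 (by omega)
      have e3t2 : distB (bvec u3) (bvec t2) = 1 := oddpair u3 t2 hU3 hT2 (net1 u3 m3 t2 mt2) hj3 hk2 (by omega)
      -- translate by bvec u1 and apply L3
      have hzero : (fun _ => false : BV) = (fun i => xor (bvec u1 i) (bvec u1 i)) := by
        funext i; simp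
      have key := L3 (fun i => xor (bvec u2 i) (bvec u1 i)) (fun i => xor (bvec u3 i) (bvec u1 i))
        (fun i => xor (bvec t1 i) (bvec u1 i)) (fun i => xor (bvec t2 i) (bvec u1 i))
        (by rw [hzero, distB_xor]; exact d12) (by rw [hzero, distB_xor]; exact d13)
        (by rw [distB_xor]; exact d23)
        (by rw [hzero, distB_xor]; exact e1t1) (by rw [distB_xor]; exact e2t1)
        (by rw [distB_xor]; exact e3t1)
        (by rw [hzero, distB_xor]; exact e1t2) (by rw [distB_xor]; exact e2t2)
        (by rw [distB_xor]; exact e3t2)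
      have : bvec t1 = bvec t2 := xor_cancel key
      exact nt (by rw [D7 t1 hk1, D7 t2 hk2, this])
    -- tightness
    have hAsum : ∑ u ∈ U'.filter (fun u => ¬ jokers u = 0), covO u =
        (U'.filter (fun u => ¬ jokers u = 0)).card := by omega
    have hallone : ∀ u ∈ U'.filter (fun u => ¬ jokers u = 0), covO u = 1 := by
      have hle : ∀ u ∈ U'.filter (fun u => ¬ jokers u = 0), (fun _ : WD => 1) u ≤ covO u :=
        fun u hu => (D2 u (Finset.mem_filter.mp hu).2).2.1
      have heq : (∑ u ∈ U'.filter (fun u => ¬ jokers u = 0), (fun _ : WD => 1) u) =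
          ∑ u ∈ U'.filter (fun u => ¬ jokers u = 0), covO u := by
        rw [hAsum, ← Finset.card_eq_sum_ones]
      intro u hu
      exact ((Finset.sum_eq_sum_iff_of_le hle).mp heq u hu).symm
    have hjone : ∀ u ∈ U'.filter (fun u => ¬ jokers u = 0), jokers u = 1 :=
      fun u hu => (D2 u (Finset.mem_filter.mp hu).2).2.2 (hallone u hu)
    -- full coverage of odd vectors
    have hcover : U'.biUnion (fun u => Cov u ∩ OddS) = OddS := by
      apply Finset.eq_of_subset_of_card_le
        (Finset.biUnion_subset.mpr (fun u _ => Finset.inter_subset_right))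
      rw [Finset.card_biUnion (fun u hu u' hu' hne => (hdisj u hu u' hu' hne).1), cardOdd]
      have hrfl : ∑ u ∈ U', (Cov u ∩ OddS).card = ∑ u ∈ U', covO u := rfl
      rw [hrfl]
      omega
    -- endgame: two odd joker-free words
    obtain ⟨t1, mt1, t2, mt2, nt⟩ := Finset.one_lt_card.mp
      (show 1 < ((U'.filter (fun u => jokers u = 0)).filter (fun u => ¬ covO u = 0)).card by omega)
    obtain ⟨hT1, hk1, hv1⟩ := memUo t1 mt1
    obtain ⟨hT2, hk2, hv2⟩ := memUo t2 mt2
    have hd12 : distB (bvec t1) (bvec t2) = 2 := by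
      have hd := distB_of_mem hP hT1 hT2 nt hk1 hk2
      have hp := Par (bvec t1) (bvec t2)
      omega
    obtain ⟨hwx, hdx⟩ := D8 _ _ hv1 hv2 hd12
    have hxodd : mid (bvec t1) (bvec t2) ∈ OddS :=
      Finset.mem_filter.mpr ⟨Finset.mem_univ _, hwx⟩
    rw [← hcover] at hxodd
    obtain ⟨u, hu, hxu⟩ := Finset.mem_biUnion.mp hxodd
    have hxCov : mid (bvec t1) (bvec t2) ∈ Cov u := (Finset.mem_inter.mp hxu).1
    by_cases hju : jokers u = 0
    · have hxb : mid (bvec t1) (bvec t2) = bvec u := D7cov u _ hju hxCov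
      have hue : u = emb (mid (bvec t1) (bvec t2)) := by rw [hxb]; exact D7 u hju
      have hneq : u ≠ t2 := by
        intro h
        have h2 : emb (mid (bvec t1) (bvec t2)) = emb (bvec t2) := by
          rw [← hue, h]; exact D7 t2 hk2
        have h3 := emb_inj h2
        rw [h3] at hdx
        unfold distB at hdx
        simp at hdx
      have hdist := (hP u hu t2 hT2 hneq).2
      have hdist2 : distS (emb (mid (bvec t1) (bvec t2))) (emb (bvec t2)) ≤ 2 := by
        rw [← hue, ← D7 t2 hk2]; exact hdist
      rw [distS_emb, hdx] at hdist2
      omega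
    · have hA : u ∈ U'.filter (fun u => ¬ jokers u = 0) := Finset.mem_filter.mpr ⟨hu, hju⟩
      have hj : jokers u = 1 := hjone u hA
      have hneq : u ≠ t2 := fun h => hju (h ▸ hk2)
      have hge := distB_ge (w := bvec t2) hxCov
      rw [hdx, hj] at hge
      have hdist := (hP u hu t2 hT2 hneq).2
      rw [D7 t2 hk2] at hdist
      omega
  · exact ⟨U9, U9prop, U9card⟩
end
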